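/- If there exists a refutation soup for a Σ₁ formula φ, then φ is not intuitionistically provable. -/
import Mathlib

namespace MFOL

/-- Formulas of minimal first-order logic (→ and ∀ only, no function symbols),
in de Bruijn representation; individual terms are just variables `ℕ`. -/
inductive Form where
  | atom : ℕ → List ℕ → Form
  | imp : Form → Form → Form
  | all : Form → Form
deriving DecidableEq

def upRen (σ : ℕ → ℕ) : ℕ → ℕ
  | 0 => 0
  | n + 1 => σ n + 1

/-- Capture-avoiding (simultaneous) substitution of variables for variables. -/
def substF : (ℕ → ℕ) → Form → Form
  | σ, .atom p args => .atom p (args.map σ)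
  | σ, .imp a b => .imp (substF σ a) (substF σ b)
  | σ, .all a => .all (substF (upRen σ) a)

/-- Substitution of the variable `x` for the outermost bound variable. -/
def subst0 (x : ℕ) : Form → Form :=
  substF (fun n => match n with | 0 => x | n + 1 => n)

def shiftF : Form → Form := substF Nat.succ

/-- Natural deduction for minimal first-order logic. -/
inductive Prv : Set Form → Form → Prop
  | ax {Γ : Set Form} {φ : Form} : φ ∈ Γ → Prv Γ φ
  | impI {Γ : Set Form} {φ ψ : Form} : Prv (insert φ Γ) ψ → Prv Γ (.imp φ ψ)
  | impE {Γ : Set Form} {φ ψ : Form} : Prv Γ (.imp φ ψ) → Prv Γ φ → Prv Γ ψ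
  | allI {Γ : Set Form} {φ : Form} : Prv (shiftF '' Γ) φ → Prv Γ (.all φ)
  | allE {Γ : Set Form} {φ : Form} (x : ℕ) : Prv Γ (.all φ) → Prv Γ (subst0 x φ)

mutual
  /-- The Σ₁ class of the Mints hierarchy: Σ₁ ::= a | Π₁ → Σ₁. -/
  inductive IsSigma1 : Form → Prop
    | atom (p : ℕ) (args : List ℕ) : IsSigma1 (.atom p args)
    | imp {τ σ : Form} : IsPi1 τ → IsSigma1 σ → IsSigma1 (.imp τ σ)
  /-- The Π₁ class of the Mints hierarchy: Π₁ ::= a | Σ₁ → Π₁ | ∀x.Π₁. -/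
  inductive IsPi1 : Form → Prop
    | atom (p : ℕ) (args : List ℕ) : IsPi1 (.atom p args)
    | imp {σ π : Form} : IsSigma1 σ → IsPi1 π → IsPi1 (.imp σ π)
    | all {π : Form} : IsPi1 π → IsPi1 (.all π)
end

def IsAtomF (f : Form) : Prop := ∃ p args, f = Form.atom p args

/-- Premises τ₁,…,τ_q of a Σ₁ formula τ₁ → ⋯ → τ_q → c. -/
def premsOf : Form → List Form
  | .imp a b => a :: premsOf b
  | .atom p args => []
  | .all a => []

/-- Target atom of a Σ₁ formula. -/
def targetOf : Form → Form
  | .imp _ b => targetOf b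
  | f => f

/-- `Unfolds ψ prems b` : instantiating the ∀-blocks of the Π₁ formula
`ψ = ∀ȳ₁(σ₁ → ∀ȳ₂(σ₂ → ⋯ → ∀ȳ_k(σ_k → b')⋯))` at some variables x̄
yields the list of (instantiated) premises `prems = [σ₁[ȳ:=x̄],…]` and
the (instantiated) target atom `b = b'[ȳ:=x̄]`. -/
inductive Unfolds : Form → List Form → Form → Prop
  | atom (p : ℕ) (args : List ℕ) : Unfolds (.atom p args) [] (.atom p args)
  | imp {σ ψ : Form} {prems : List Form} {b : Form} :
      Unfolds ψ prems b → Unfolds (.imp σ ψ) (σ :: prems) b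
  | all {ψ : Form} {prems : List Form} {b : Form} (x : ℕ) :
      Unfolds (subst0 x ψ) prems b → Unfolds (.all ψ) prems b

/-- `closedAt k φ`: all free de Bruijn indices of `φ` are `< k`. -/
def closedAt : ℕ → Form → Prop
  | k, .atom _ args => ∀ x ∈ args, x < k
  | k, .imp a b => closedAt k a ∧ closedAt k b
  | k, .all a => closedAt (k + 1) a

end MFOL
namespace MFOL

/-- Subformula relation. -/
inductive SubfOf : Form → Form → Prop
  | refl (φ : Form) : SubfOf φ φ
  | impL {χ a b : Form} : SubfOf χ a → SubfOf χ (.imp a b)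
  | impR {χ a b : Form} : SubfOf χ b → SubfOf χ (.imp a b)
  | all {χ a : Form} : SubfOf χ a → SubfOf χ (.all a)

/-- Substitution instances of Π₁ subformulas of φ. -/
def Insts (φ : Form) : Set Form :=
  {τ | ∃ ψ, SubfOf ψ φ ∧ IsPi1 ψ ∧ ∃ σ : ℕ → ℕ, τ = substF σ ψ}

/-- An i-th answer in `Z` to the question challenging premise `σ`
asked at a disjudgment with environment `Γ`. -/
def IsAnswerOf (Z : Set (Set Form × Form)) (Γ : Set Form) (σ : Form) : Prop :=
  ∃ z ∈ Z, z.2 = targetOf σ ∧ Γ ∪ {τ | τ ∈ premsOf σ} ⊆ z.1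

/-- A refutation soup for φ: a set of disjudgments `Γ ⊬ a` containing the
initial disjudgment (the decomposition of φ) and such that every question
asked at a member of `Z` has some i-th answer in `Z`. -/
def IsSoup (φ : Form) (Z : Set (Set Form × Form)) : Prop :=
  ({τ | τ ∈ premsOf φ}, targetOf φ) ∈ Z ∧
  (∀ z ∈ Z, z.1 ⊆ Insts φ ∧ IsAtomF z.2) ∧
  (∀ z ∈ Z, ∀ ψ ∈ z.1, ∀ prems, Unfolds ψ prems z.2 → ∃ σ ∈ prems, IsAnswerOf Z z.1 σ)

/-- Length of a formula. -/
def fsize : Form → ℕ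
  | .atom _ args => 1 + args.length
  | .imp a b => fsize a + fsize b + 1
  | .all a => fsize a + 1

/-- Maximal arity of a predicate occurring in a formula. -/
def maxAr : Form → ℕ
  | .atom _ args => args.length
  | .imp a b => max (maxAr a) (maxAr b)
  | .all a => maxAr a

end MFOL

namespace MFOL

theorem fsize_substF (σ : ℕ → ℕ) (f : Form) : fsize (substF σ f) = fsize f := by
  induction f generalizing σ with
  | atom p args => simp [substF, fsize]
  | imp a b iha ihb => simp [substF, fsize, iha, ihb]
  | all a iha => simp [substF, fsize, iha]

theorem substF_ext {σ σ' : ℕ → ℕ} (h : ∀ n, σ n = σ' n) (f : Form) :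
    substF σ f = substF σ' f := by
  induction f generalizing σ σ' with
  | atom p args =>
      simp only [substF, Form.atom.injEq, true_and]
      exact List.map_congr_left (fun x _ => h x)
  | imp a b iha ihb => simp [substF, iha h, ihb h]
  | all a iha =>
      simp only [substF, Form.all.injEq]
      apply iha
      intro n; cases n with
      | zero => rfl
      | succ n => simp [upRen, h n]

theorem substF_comp (σ₂ σ₁ : ℕ → ℕ) (f : Form) :
    substF σ₂ (substF σ₁ f) = substF (σ₂ ∘ σ₁) f := by
  induction f generalizing σ₁ σ₂ with
  | atom p args => simp [substF, List.map_map]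
  | imp a b iha ihb => simp [substF, iha, ihb]
  | all a iha =>
      simp only [substF, Form.all.injEq, iha]
      apply substF_ext
      intro n; cases n with
      | zero => rfl
      | succ n => rfl

theorem substF_id (f : Form) : substF id f = f := by
  induction f with
  | atom p args => simp [substF]
  | imp a b iha ihb => simp [substF, iha, ihb]
  | all a iha =>
      simp only [substF, Form.all.injEq]
      rw [substF_ext (σ' := id) (fun n => by cases n <;> simp [upRen]) a, iha]

/-- `cons x σ`: substitute `x` for index 0 and `σ n` for index `n+1`. -/
def consS (x : ℕ) (σ : ℕ → ℕ) : ℕ → ℕ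
  | 0 => x
  | n + 1 => σ n

theorem subst0_substF_upRen (x : ℕ) (σ : ℕ → ℕ) (a : Form) :
    subst0 x (substF (upRen σ) a) = substF (consS x σ) a := by
  rw [subst0, substF_comp]
  exact substF_ext (fun n => by cases n <;> rfl) a

theorem substF_shiftF (x : ℕ) (σ : ℕ → ℕ) (ψ : Form) :
    substF (consS x σ) (shiftF ψ) = substF σ ψ := by
  rw [shiftF, substF_comp]
  exact substF_ext (fun n => rfl) ψ

theorem substF_subst0 (σ : ℕ → ℕ) (x : ℕ) (a : Form) :
    substF σ (subst0 x a) = substF (consS (σ x) σ) a := by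
  rw [subst0, substF_comp]
  exact substF_ext (fun n => by cases n <;> rfl) a

/-- Kripke forcing over the poset of contexts, with atoms forced unless
refuted by a disjudgment in `Z`. -/
def Forces (Z : Set (Set Form × Form)) : Set Form → Form → Prop
  | Γ, .atom p args => ¬ ∃ z ∈ Z, Γ ⊆ z.1 ∧ z.2 = Form.atom p args
  | Γ, .imp a b => ∀ Δ : Set Form, Γ ⊆ Δ → Forces Z Δ a → Forces Z Δ b
  | Γ, .all a => ∀ x : ℕ, Forces Z Γ (subst0 x a)
termination_by _ f => fsize f
decreasing_by all_goals (simp [fsize, subst0, fsize_substF]; try omega)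

theorem Forces_mono (Z : Set (Set Form × Form)) (f : Form) (Γ Δ : Set Form)
    (hsub : Γ ⊆ Δ) (hF : Forces Z Γ f) : Forces Z Δ f := by
  match f with
  | .atom p args =>
      rw [Forces] at hF ⊢
      rintro ⟨z, hz, h1, h2⟩
      exact hF ⟨z, hz, hsub.trans h1, h2⟩
  | .imp a b =>
      rw [Forces] at hF ⊢
      intro Δ' h1 h2
      exact hF Δ' (hsub.trans h1) h2
  | .all a =>
      rw [Forces] at hF ⊢
      intro x
      exact Forces_mono Z (subst0 x a) Γ Δ hsub (hF x)
termination_by fsize f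
decreasing_by simp [fsize, subst0, fsize_substF]

theorem fsize_premsOf {τ σ : Form} (h : τ ∈ premsOf σ) : fsize τ < fsize σ := by
  induction σ with
  | atom p args => simp [premsOf] at h
  | all a _ => simp [premsOf] at h
  | imp a b _ ihb =>
      simp only [premsOf, List.mem_cons] at h
      rcases h with h | h
      · subst h; simp [fsize]
      · have := ihb h; simp [fsize]; omega

theorem Forces_app (Z : Set (Set Form × Form)) :
    ∀ (σ : Form) (Γ : Set Form), Forces Z Γ σ →
      (∀ τ ∈ premsOf σ, Forces Z Γ τ) → Forces Z Γ (targetOf σ) := by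
  intro σ
  induction σ with
  | atom p args => intro Γ hF _; exact hF
  | all a _ => intro Γ hF _; exact hF
  | imp a b _ ihb =>
      intro Γ hF hp
      rw [Forces] at hF
      have hb : Forces Z Γ b := hF Γ (subset_refl _) (hp a (by simp [premsOf]))
      exact ihb Γ hb (fun τ hτ => hp τ (by simp [premsOf, hτ]))

theorem targetOf_sigma1 : ∀ {f : Form}, IsSigma1 f → ∃ p args, targetOf f = Form.atom p args := by
  intro f
  induction f with
  | atom p args => exact fun _ => ⟨p, args, rfl⟩
  | imp a b _ ihb => intro h; cases h with | imp _ hb => exact ihb hb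
  | all a _ => intro h; cases h

theorem refutAux {φ : Form} {Z : Set (Set Form × Form)} (hZ : IsSoup φ Z) (n : ℕ)
    (HIH : ∀ τ (Γ' : Set Form), fsize τ < n → τ ∈ Γ' → Forces Z Γ' τ)
    (χ : Form) (pending : List Form) (Γ Δ : Set Form) (ψfull : Form)
    (hsz : fsize χ ≤ n) (hmem : ψfull ∈ Γ) (hΓΔ : Γ ⊆ Δ)
    (hU : ∀ prems b, Unfolds χ prems b → Unfolds ψfull (pending ++ prems) b)
    (hpend : ∀ σ' ∈ pending, Forces Z Δ σ' ∧ ∀ τ ∈ premsOf σ', fsize τ < n) :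
    Forces Z Δ χ := by
  match χ with
  | .atom p args =>
      rw [Forces]
      rintro ⟨z'', hz''Z, hΔz, hz2⟩
      have hU0 : Unfolds ψfull pending z''.2 := by
        have h1 := hU [] (.atom p args) (Unfolds.atom p args)
        rw [List.append_nil] at h1
        rw [hz2]; exact h1
      obtain ⟨σi, hσi, z', hz'Z, hz'2, hz'sub⟩ :=
        hZ.2.2 z'' hz''Z ψfull (hΔz (hΓΔ hmem)) pending hU0
      obtain ⟨hFσ, hτbound⟩ := hpend σi hσi
      have hΔz' : Δ ⊆ z'.1 := fun x hx => hz'sub (Set.mem_union_left _ (hΔz hx))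
      have hFσ' : Forces Z z'.1 σi := Forces_mono Z σi Δ z'.1 hΔz' hFσ
      have hprem : ∀ τ ∈ premsOf σi, Forces Z z'.1 τ := fun τ hτ =>
        HIH τ z'.1 (hτbound τ hτ) (hz'sub (Set.mem_union_right _ hτ))
      have htgt : Forces Z z'.1 (targetOf σi) := Forces_app Z σi z'.1 hFσ' hprem
      obtain ⟨q, as, hq⟩ : IsAtomF z'.2 := (hZ.2.1 z' hz'Z).2
      rw [← hz'2, hq, Forces] at htgt
      exact htgt ⟨z', hz'Z, subset_refl _, hq⟩
  | .imp σ χ' =>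
      rw [Forces]
      intro Δ' hΔΔ' hFσ
      apply refutAux hZ n HIH χ' (pending ++ [σ]) Γ Δ' ψfull
      · simp [fsize] at hsz; omega
      · exact hmem
      · exact hΓΔ.trans hΔΔ'
      · intro prems b hu
        have h1 := hU (σ :: prems) b (Unfolds.imp hu)
        simpa [List.append_assoc] using h1
      · intro σ' hσ'
        rcases List.mem_append.mp hσ' with hh | hh
        · obtain ⟨hF, hb⟩ := hpend σ' hh
          exact ⟨Forces_mono Z σ' Δ Δ' hΔΔ' hF, hb⟩
        · simp only [List.mem_singleton] at hh
          subst hh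
          refine ⟨hFσ, fun τ hτ => ?_⟩
          have h1 := fsize_premsOf hτ
          simp [fsize] at hsz; omega
  | .all χ' =>
      rw [Forces]
      intro x
      apply refutAux hZ n HIH (subst0 x χ') pending Γ Δ ψfull
      · rw [subst0, fsize_substF]; simp [fsize] at hsz; omega
      · exact hmem
      · exact hΓΔ
      · intro prems b hu
        exact hU prems b (Unfolds.all x hu)
      · exact hpend
termination_by fsize χ
decreasing_by all_goals (simp [fsize, subst0, fsize_substF]; try omega)

theorem refutMain {φ : Form} {Z : Set (Set Form × Form)} (hZ : IsSoup φ Z) :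
    ∀ (n : ℕ) (ψ : Form) (Γ : Set Form), fsize ψ ≤ n → ψ ∈ Γ → Forces Z Γ ψ := by
  intro n
  induction n using Nat.strong_induction_on with
  | _ n IH =>
    intro ψ Γ hsz hmem
    exact refutAux hZ n (fun τ Γ' hlt hm => IH (fsize τ) hlt τ Γ' le_rfl hm)
      ψ [] Γ Γ ψ hsz hmem (subset_refl _)
      (fun prems b hu => by simpa using hu)
      (by simp)

theorem soundF {Z : Set (Set Form × Form)} {Γ0 : Set Form} {f : Form} (h : Prv Γ0 f) :
    ∀ (σ : ℕ → ℕ) (Δ : Set Form),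
      (∀ ψ ∈ Γ0, Forces Z Δ (substF σ ψ)) → Forces Z Δ (substF σ f) := by
  induction h with
  | ax hmem => exact fun σ Δ hyp => hyp _ hmem
  | impI h ih =>
      intro σ Δ hyp
      rw [substF, Forces]
      intro Δ' hsub hFa
      apply ih σ Δ'
      intro ψ hψ
      rcases Set.mem_insert_iff.mp hψ with rfl | hψ
      · exact hFa
      · exact Forces_mono Z _ Δ Δ' hsub (hyp ψ hψ)
  | impE h1 h2 ih1 ih2 =>
      intro σ Δ hyp
      have h3 := ih1 σ Δ hyp
      rw [substF, Forces] at h3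
      exact h3 Δ (subset_refl _) (ih2 σ Δ hyp)
  | allI h ih =>
      intro σ Δ hyp
      rw [substF, Forces]
      intro x
      rw [subst0_substF_upRen]
      apply ih (consS x σ) Δ
      intro ψ hψ
      obtain ⟨ψ0, hψ0, rfl⟩ := hψ
      rw [substF_shiftF]
      exact hyp ψ0 hψ0
  | allE x h ih =>
      intro σ Δ hyp
      have h3 := ih σ Δ hyp
      rw [substF, Forces] at h3
      have h4 := h3 (σ x)
      rw [subst0_substF_upRen] at h4
      rw [substF_subst0]
      exact h4

end MFOL

/-- If there exists a refutation soup for the closed Σ₁ formula φ, then φ is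
not provable in minimal first-order logic. -/
theorem stmt14 (φ : MFOL.Form) (hφ : MFOL.IsSigma1 φ) (hc : MFOL.closedAt 0 φ)
    (h : ∃ Z : Set (Set MFOL.Form × MFOL.Form), MFOL.IsSoup φ Z) :
    ¬ MFOL.Prv ∅ φ := by
  intro hprv
  obtain ⟨Z, hZ⟩ := h
  have hsound := MFOL.soundF (Z := Z) hprv id {τ | τ ∈ MFOL.premsOf φ}
    (by intro ψ hψ; simp at hψ)
  rw [MFOL.substF_id] at hsound
  have hforce : MFOL.Forces Z {τ | τ ∈ MFOL.premsOf φ} (MFOL.targetOf φ) :=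
    MFOL.Forces_app Z φ _ hsound
      (fun τ hτ => MFOL.refutMain hZ (MFOL.fsize τ) τ _ le_rfl hτ)
  obtain ⟨p, args, hpa⟩ := MFOL.targetOf_sigma1 hφ
  rw [hpa, MFOL.Forces] at hforce
  exact hforce ⟨({τ | τ ∈ MFOL.premsOf φ}, MFOL.targetOf φ), hZ.1, subset_refl _, by rw [hpa]⟩
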